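/- For any integer A, the sum over n ≥ 0 (with n + A ≥ 0) of q^(n²+An)/((q;q)_n (q;q)_{n+A}) equals 1/(q;q)_∞, as an identity of formal power series in q (terms with n + A < 0 are interpreted as 0). -/

import Mathlib

open scoped BigOperators

/-- `(q;q)_n = ∏_{k=1}^n (1 - q^k)` -/
noncomputable def qp (q : ℂ) (n : ℕ) : ℂ := ∏ k ∈ Finset.range n, (1 - q ^ (k + 1))

/-- `(q;q)_∞ = ∏_{k≥1} (1 - q^k)` -/
noncomputable def qpInf (q : ℂ) : ℂ := ∏' k : ℕ, (1 - q ^ (k + 1))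

/-- `(a;q)_n = ∏_{k=1}^n (1 - a q^{k-1})` -/
noncomputable def qpa (a q : ℂ) (n : ℕ) : ℂ := ∏ k ∈ Finset.range n, (1 - a * q ^ k)

/-- `(a;q)_∞ = ∏_{k≥0} (1 - a q^k)` -/
noncomputable def qpaInf (a q : ℂ) : ℂ := ∏' k : ℕ, (1 - a * q ^ k)

/-! The finite Durfee-rectangle identity
`∑ₙ q^(n(n+a)) [N, n]_q [N+a, n+a]_q = [2N+a, N]_q`, a case of the `q`-Vandermonde identity,
becomes the theorem as `N → ∞`: for `|q| < 1` each Gaussian binomial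
`[m, j]_q = (q;q)_m / ((q;q)_j (q;q)_(m-j))` tends to `1/(q;q)_j` as `m → ∞`, the right-hand side
tends to `1/(q;q)_∞`, and the Gaussian binomials are uniformly bounded, so Tannery's theorem lets
the limit pass through the sum. A negative `A = -a` reduces to `a` by the shift `n ↦ n + a`. -/

open Finset Filter Topology

section QBinomial

variable {R : Type*} [CommSemiring R]

def qBinom (q : R) : ℕ → ℕ → R
  | _, 0 => 1
  | 0, _ + 1 => 0
  | m + 1, j + 1 => qBinom q m j + q ^ (j + 1) * qBinom q m (j + 1)

variable (q : R)

@[simp]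
lemma qBinom_zero_right (m : ℕ) : qBinom q m 0 = 1 := by
  cases m <;> rfl

lemma qBinom_succ_succ (m j : ℕ) :
    qBinom q (m + 1) (j + 1) = qBinom q m j + q ^ (j + 1) * qBinom q m (j + 1) := rfl

lemma qBinom_eq_zero_of_lt {m j : ℕ} (h : m < j) : qBinom q m j = 0 := by
  induction m generalizing j with
  | zero => obtain ⟨j, rfl⟩ := Nat.exists_eq_succ_of_ne_zero h.ne'; rfl
  | succ m ih =>
    obtain ⟨j, rfl⟩ := Nat.exists_eq_succ_of_ne_zero (Nat.ne_zero_of_lt h)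
    rw [qBinom_succ_succ, ih (by omega), ih (by omega), mul_zero, add_zero]

/-- The `q`-Vandermonde identity. -/
theorem qBinom_add (m n k : ℕ) :
    qBinom q (m + n) k =
      ∑ p ∈ antidiagonal k, q ^ ((m - p.1) * p.2) * qBinom q m p.1 * qBinom q n p.2 := by
  induction m generalizing k with
  | zero =>
    rw [Nat.sum_antidiagonal_eq_sum_range_succ_mk, sum_range_succ', sum_eq_zero]
    · simp
    · intro i _
      rw [qBinom_eq_zero_of_lt q (Nat.succ_pos i), mul_zero, zero_mul]
  | succ m ih =>
    cases k with
    | zero => simp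
    | succ k =>
      have shifted : ∀ p ∈ antidiagonal k,
          q ^ ((m + 1 - (p.1 + 1)) * p.2) * qBinom q (m + 1) (p.1 + 1) * qBinom q n p.2 =
            q ^ ((m - p.1) * p.2) * qBinom q m p.1 * qBinom q n p.2 +
              q ^ (k + 1) * (q ^ ((m - (p.1 + 1)) * p.2) * qBinom q m (p.1 + 1) *
                qBinom q n p.2) := by
        rintro ⟨i, l⟩ hil
        rw [HasAntidiagonal.mem_antidiagonal] at hil
        simp only [Nat.add_sub_add_right, qBinom_succ_succ]
        rcases lt_or_ge m (i + 1) with hm | hm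
        · rw [qBinom_eq_zero_of_lt q hm]
          ring
        · have hexp : (m - i) * l + (i + 1) = k + 1 + (m - (i + 1)) * l := by
            obtain ⟨r, rfl⟩ := Nat.exists_eq_add_of_le hm
            rw [show i + 1 + r - i = r + 1 by omega, show i + 1 + r - (i + 1) = r by omega, ← hil]
            ring
          calc _ = q ^ ((m - i) * l) * qBinom q m i * qBinom q n l +
                q ^ ((m - i) * l + (i + 1)) * qBinom q m (i + 1) * qBinom q n l := by ring
            _ = _ := by rw [hexp]; ring
      rw [Nat.sum_antidiagonal_succ, sum_congr rfl shifted, sum_add_distrib, ← ih, ← mul_sum,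
        Nat.add_right_comm, qBinom_succ_succ, ih (k + 1), Nat.sum_antidiagonal_succ, mul_add]
      simp only [qBinom_zero_right, Nat.sub_zero, mul_one]
      ring

end QBinomial

@[simp]
lemma qp_zero (q : ℂ) : qp q 0 = 1 := rfl

lemma qp_succ (q : ℂ) (n : ℕ) : qp q (n + 1) = qp q n * (1 - q ^ (n + 1)) :=
  Finset.prod_range_succ _ _

lemma qBinom_mul_qp_mul_qp (q : ℂ) {m j : ℕ} (h : j ≤ m) :
    qBinom q m j * qp q j * qp q (m - j) = qp q m := by
  induction m generalizing j with
  | zero => obtain rfl := Nat.le_zero.1 h; simp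
  | succ m ih =>
    cases j with
    | zero => simp
    | succ j =>
      have hj := ih (Nat.le_of_succ_le_succ h)
      rw [qBinom_succ_succ, qp_succ, Nat.add_sub_add_right, qp_succ]
      rcases (Nat.le_of_succ_le_succ h).eq_or_lt with rfl | hlt
      · rw [qBinom_eq_zero_of_lt q (Nat.lt_succ_self j)]
        linear_combination (1 - q ^ (j + 1)) * hj
      · obtain ⟨r, rfl⟩ := Nat.exists_eq_add_of_lt hlt
        have hj' := ih hlt
        rw [show j + r + 1 - j = r + 1 by omega, qp_succ] at hj
        rw [show j + r + 1 - (j + 1) = r by omega, qp_succ] at hj'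
        rw [show j + r + 1 - j = r + 1 by omega, qp_succ]
        linear_combination (1 - q ^ (j + 1)) * hj + q ^ (j + 1) * (1 - q ^ (r + 1)) * hj'

section UnitDisc

variable {q : ℂ}

lemma one_sub_pow_succ_ne_zero (hq : ‖q‖ < 1) (k : ℕ) : 1 - q ^ (k + 1) ≠ 0 := by
  refine sub_ne_zero.2 fun h => ?_
  have : ‖q‖ ^ (k + 1) < 1 := pow_lt_one₀ (norm_nonneg q) hq k.succ_ne_zero
  rw [← norm_pow, ← h, norm_one] at this
  exact this.false

lemma qp_ne_zero (hq : ‖q‖ < 1) (n : ℕ) : qp q n ≠ 0 :=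
  Finset.prod_ne_zero_iff.2 fun k _ => one_sub_pow_succ_ne_zero hq k

lemma tendsto_qp (hq : ‖q‖ < 1) : Tendsto (qp q) atTop (𝓝 (qpInf q)) :=
  (ModularForm.multipliable_one_sub_pow hq).hasProd.tendsto_prod_nat

lemma qpInf_ne_zero (hq : ‖q‖ < 1) : qpInf q ≠ 0 := by
  have hsum : Summable fun k => ‖-q ^ (k + 1)‖ := by
    simpa using (summable_nat_add_iff 1).2 (summable_geometric_of_lt_one (norm_nonneg q) hq)
  simpa only [qpInf, ← sub_eq_add_neg] using tprod_one_add_ne_zero_of_summable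
    (fun k => by simpa only [← sub_eq_add_neg] using one_sub_pow_succ_ne_zero hq k) hsum

lemma qBinom_eq_div (hq : ‖q‖ < 1) {m j : ℕ} (h : j ≤ m) :
    qBinom q m j = qp q m / (qp q j * qp q (m - j)) := by
  rw [eq_div_iff (mul_ne_zero (qp_ne_zero hq j) (qp_ne_zero hq (m - j))), ← mul_assoc,
    qBinom_mul_qp_mul_qp q h]

lemma qBinom_sub (hq : ‖q‖ < 1) {m j : ℕ} (h : j ≤ m) : qBinom q m (m - j) = qBinom q m j := by
  rw [qBinom_eq_div hq h, qBinom_eq_div hq (Nat.sub_le m j), Nat.sub_sub_self h, mul_comm]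

lemma tendsto_qBinom (hq : ‖q‖ < 1) (j : ℕ) :
    Tendsto (fun m => qBinom q m j) atTop (𝓝 (qp q j)⁻¹) := by
  have hlim : Tendsto (fun m => qp q m / (qp q j * qp q (m - j))) atTop
      (𝓝 (qpInf q / (qp q j * qpInf q))) :=
    (tendsto_qp hq).div (tendsto_const_nhds.mul ((tendsto_qp hq).comp (tendsto_sub_atTop_nat j)))
      (mul_ne_zero (qp_ne_zero hq j) (qpInf_ne_zero hq))
  rw [div_mul_cancel_right₀ (qpInf_ne_zero hq)] at hlim
  exact hlim.congr' ((eventually_ge_atTop j).mono fun m hm => (qBinom_eq_div hq hm).symm)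

lemma exists_norm_qBinom_le (hq : ‖q‖ < 1) : ∃ C, ∀ m j, ‖qBinom q m j‖ ≤ C := by
  obtain ⟨M, hM⟩ := isBounded_iff_forall_norm_le.1
    (Metric.isBounded_range_of_tendsto _ (tendsto_qp hq))
  obtain ⟨K, hK⟩ := isBounded_iff_forall_norm_le.1
    (Metric.isBounded_range_of_tendsto _ ((tendsto_qp hq).inv₀ (qpInf_ne_zero hq)))
  have hM0 : 0 ≤ M := (norm_nonneg _).trans (hM _ ⟨0, rfl⟩)
  have hK0 : 0 ≤ K := (norm_nonneg _).trans (hK _ ⟨0, rfl⟩)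
  refine ⟨M * (K * K), fun m j => ?_⟩
  rcases le_or_gt j m with h | h
  · rw [qBinom_eq_div hq h, div_eq_mul_inv, mul_inv, norm_mul, norm_mul]
    exact mul_le_mul (hM _ ⟨m, rfl⟩) (mul_le_mul (hK _ ⟨j, rfl⟩) (hK _ ⟨m - j, rfl⟩)
      (norm_nonneg _) hK0) (by positivity) hM0
  · rw [qBinom_eq_zero_of_lt q h, norm_zero]
    positivity

theorem sum_durfee_eq_qBinom (hq : ‖q‖ < 1) (a N : ℕ) :
    ∑ n ∈ range (N + 1), q ^ (n * (n + a)) * qBinom q N n * qBinom q (N + a) (n + a) =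
      qBinom q (N + a + N) N := by
  rw [qBinom_add, ← Nat.sum_antidiagonal_swap]
  simp only [Prod.fst_swap, Prod.snd_swap]
  rw [Nat.sum_antidiagonal_eq_sum_range_succ (fun l i => q ^ ((N + a - i) * l) *
      qBinom q (N + a) i * qBinom q N l)]
  refine sum_congr rfl fun n hn => ?_
  have hn : n ≤ N := Nat.lt_succ_iff.1 (mem_range.1 hn)
  rw [show N - n = N + a - (n + a) by omega, qBinom_sub hq (by omega),
    Nat.sub_sub_self (by omega)]
  ring

theorem tsum_durfee_eq_one_div_qpInf (hq : ‖q‖ < 1) (a : ℕ) :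
    ∑' n : ℕ, q ^ (n * (n + a)) / (qp q n * qp q (n + a)) = 1 / qpInf q := by
  obtain ⟨C, hC⟩ := exists_norm_qBinom_le hq
  have hC0 : 0 ≤ C := (norm_nonneg _).trans (hC 0 0)
  set f : ℕ → ℕ → ℂ := fun N n => q ^ (n * (n + a)) * qBinom q N n * qBinom q (N + a) (n + a)
  have hfinite (N : ℕ) : ∑' n, f N n = qBinom q (N + a + N) N := by
    rw [tsum_eq_sum (s := range (N + 1)), sum_durfee_eq_qBinom hq]
    intro n hn
    simp only [f, qBinom_eq_zero_of_lt q (not_lt.1 (mt mem_range.2 hn)), mul_zero, zero_mul]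
  have hterm (n : ℕ) :
      Tendsto (f · n) atTop (𝓝 (q ^ (n * (n + a)) / (qp q n * qp q (n + a)))) := by
    rw [div_eq_mul_inv, mul_inv, ← mul_assoc]
    exact (tendsto_const_nhds.mul (tendsto_qBinom hq n)).mul
      ((tendsto_qBinom hq (n + a)).comp (tendsto_add_atTop_nat a))
  have hbound (N n : ℕ) : ‖f N n‖ ≤ C * C * ‖q‖ ^ n := by
    have : ‖q‖ ^ (n * (n + a)) ≤ ‖q‖ ^ n := pow_le_pow_of_le_one (norm_nonneg q) hq.le
      ((Nat.le_mul_self n).trans (Nat.mul_le_mul_left n (Nat.le_add_right n a)))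
    calc ‖f N n‖ = ‖q‖ ^ (n * (n + a)) * ‖qBinom q N n‖ * ‖qBinom q (N + a) (n + a)‖ := by
          simp only [f, norm_mul, norm_pow]
      _ ≤ ‖q‖ ^ n * C * C := by gcongr <;> apply hC
      _ = C * C * ‖q‖ ^ n := by ring
  have hlim := tendsto_tsum_of_dominated_convergence
    ((summable_geometric_of_lt_one (norm_nonneg q) hq).mul_left (C * C)) hterm
    (.of_forall hbound)
  have hlim' : Tendsto (fun N => qBinom q (N + a + N) N) atTop (𝓝 (1 / qpInf q)) := by
    have hP := tendsto_qp hq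
    have h := (hP.comp (tendsto_atTop_mono (fun N => Nat.le_add_left N (N + a)) tendsto_id)).div
      (hP.mul (hP.comp (tendsto_add_atTop_nat a)))
      (mul_ne_zero (qpInf_ne_zero hq) (qpInf_ne_zero hq))
    rw [div_mul_cancel_left₀ (qpInf_ne_zero hq), inv_eq_one_div] at h
    refine h.congr fun N => ?_
    rw [qBinom_eq_div hq (Nat.le_add_left N (N + a)), Nat.add_sub_cancel]
    rfl
  exact tendsto_nhds_unique (hlim.congr hfinite) hlim'

end UnitDisc

/-- For any integer `A`, `∑_{n ≥ 0, n+A ≥ 0} q^(n²+An)/((q)_n (q)_{n+A}) = 1/(q)_∞`. -/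
theorem andrews_lemma (q : ℂ) (hq : ‖q‖ < 1) (A : ℤ) :
    ∑' n : ℕ, (if (n : ℤ) + A < 0 then 0 else
      q ^ ((n * ((n : ℤ) + A)).toNat) / (qp q n * qp q ((n : ℤ) + A).toNat)) =
    1 / qpInf q := by
  obtain ⟨a, rfl | rfl⟩ := A.eq_nat_or_neg
  · rw [← tsum_durfee_eq_one_div_qpInf hq a]
    refine tsum_congr fun n => ?_
    rw [if_neg (by omega)]
    norm_cast
  · rw [← tsum_durfee_eq_one_div_qpInf hq a, ← (add_left_injective a).tsum_eq]
    · refine tsum_congr fun k => ?_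
      rw [if_neg (by omega)]
      push_cast [add_neg_cancel_right]
      norm_cast
      ring
    · intro n hn
      exact ⟨n - a, Nat.sub_add_cancel (not_lt.1 fun h => hn (if_pos (by omega)))⟩
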